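/- Let λ∈ℂ with λ∉{1,2,4,5,6}, and let R(λ)=λ(5−λ). There exist constants c_{0,λ},c_{1,λ},…,c_{6,λ}∈ℂ with c_{0,λ}≠0 such that for every function f:Γ→ℂ one has (R(λ)+Δ_{(−1)})f(y0)=Σ_{i=0}^{6} c_{i,λ}·(λ+Δ)f(y_i). -/

import Mathlib

noncomputable section

namespace SGpaper

/-- The eleven vertices of the graph `Γ`. -/
inductive GammaV : Type
  | x1 | x2 | x3 | x4 | y0 | y1 | y2 | y3 | y4 | y5 | y6
  deriving DecidableEq

open GammaV

instance : Fintype GammaV :=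
  ⟨{x1, x2, x3, x4, y0, y1, y2, y3, y4, y5, y6}, fun x => by cases x <;> simp⟩

/-- The six small triangles (cells) of `Γ`. -/
def cells : List (List GammaV) :=
  [[x1, y1, y5], [y1, y0, y4], [y5, y4, x4], [y0, y2, y3], [y2, x2, y6], [y3, y6, x3]]

/-- Adjacency in `Γ`: two distinct vertices lying in a common small triangle. -/
def adjG (a b : GammaV) : Prop :=
  a ≠ b ∧ ∃ c ∈ cells, a ∈ c ∧ b ∈ c

instance : DecidableRel adjG := fun _ _ => by unfold adjG; infer_instance

/-- The graph Laplacian on `Γ`: `Δf(v) = Σ_{z ∼ v} f(z) - 4 f(v)`. -/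
def laplG (f : GammaV → ℂ) (v : GammaV) : ℂ :=
  (∑ z ∈ Finset.univ.filter (fun z => adjG v z), f z) - 4 * f v

/-- The coarse Laplacian at `y₀`: `Δ_{(-1)}f(y₀) = f(x₁)+f(x₂)+f(x₃)+f(x₄) - 4 f(y₀)`. -/
def laplG1 (f : GammaV → ℂ) : ℂ :=
  f x1 + f x2 + f x3 + f x4 - 4 * f y0

/-- The list `y₀, y₁, …, y₆`. -/
def yv : Fin 7 → GammaV
  | 0 => y0 | 1 => y1 | 2 => y2 | 3 => y3 | 4 => y4 | 5 => y5 | 6 => y6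

/-- The list `x₁, …, x₄`. -/
def xv : Fin 4 → GammaV
  | 0 => x1 | 1 => x2 | 2 => x3 | 3 => x4

/-- The spectral decimation polynomial `R(λ) = λ(5-λ)`. -/
def R : ℂ → ℂ := fun z => z * (5 - z)

/-! Both sides are linear in `f`, so it suffices to match the coefficient of every `f v`. By the
symmetry of `Γ` one looks for `c₁ = ⋯ = c₄ = a` and `c₅ = c₆ = b`; matching at the `xⱼ`, at
`y₅, y₆`, at `y₁, …, y₄` and at `y₀` gives four linear equations in `c₀, a, b`. The first three
force `b = -2/(λ-6)`, `a = (λ-4)/(λ-6)`, `c₀ = -(λ-2)(λ-5)/(λ-6)`, and the overdetermined fourth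
holds exactly because `R(λ) = λ(5-λ)`: then `c₀(λ-4) + 4a = -(λ-1)(λ-4) = R(λ) - 4`. -/

theorem filter_adjG_eq (v : GammaV) :
    Finset.univ.filter (fun z => adjG v z) =
      (match v with
        | x1 => {y1, y5} | x2 => {y2, y6} | x3 => {y3, y6} | x4 => {y4, y5}
        | y0 => {y1, y2, y3, y4} | y1 => {x1, y0, y4, y5} | y2 => {x2, y0, y3, y6}
        | y3 => {x3, y0, y2, y6} | y4 => {x4, y0, y1, y5} | y5 => {x1, x4, y1, y4}
        | y6 => {x2, x3, y2, y3} : Finset GammaV) := by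
  cases v <;> decide

theorem R_mul_add_laplG1_eq_sum {lam c₀ a b : ℂ} (hx : a + b = 1)
    (hy₅ : b * (lam - 4) + 2 * a = 0) (hy₁ : a * (lam - 3) + b + c₀ = 0)
    (hy₀ : c₀ * (lam - 4) + 4 * a = R lam - 4) (f : GammaV → ℂ) :
    R lam * f y0 + laplG1 f =
      ∑ i : Fin 7, ![c₀, a, a, a, a, b, b] i * (lam * f (yv i) + laplG f (yv i)) := by
  simp only [Fin.sum_univ_seven, yv, Matrix.cons_val]
  simp only [laplG, laplG1, filter_adjG_eq, Finset.sum_insert, Finset.mem_insert,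
    Finset.mem_singleton, Finset.sum_singleton, reduceCtorEq, or_self, not_false_eq_true]
  linear_combination -(f x1 + f x2 + f x3 + f x4) * hx - (f y5 + f y6) * hy₅
    - (f y1 + f y2 + f y3 + f y4) * hy₁ - f y0 * hy₀

open GammaV in
/-- For `λ ∉ {1,2,4,5,6}` there are constants `c₀,…,c₆ ∈ ℂ` with `c₀ ≠ 0`
such that for every `f : Γ → ℂ`,
`(R(λ) + Δ_{(-1)})f(y₀) = Σ_{i=0}^{6} cᵢ (λ + Δ)f(yᵢ)`. -/
theorem decimation_resolvent (lam : ℂ) (hlam : lam ∉ ({1, 2, 4, 5, 6} : Set ℂ)) :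
    ∃ c : Fin 7 → ℂ, c 0 ≠ 0 ∧ ∀ f : GammaV → ℂ,
      R lam * f y0 + laplG1 f = ∑ i : Fin 7, c i * (lam * f (yv i) + laplG f (yv i)) := by
  have sub_ne {μ : ℂ} (hμ : μ ∈ ({1, 2, 4, 5, 6} : Set ℂ)) : lam - μ ≠ 0 :=
    sub_ne_zero.mpr fun h => hlam (h ▸ hμ)
  have h₆ := sub_ne (μ := 6) (by simp)
  refine ⟨![-(lam - 2) * (lam - 5) / (lam - 6), (lam - 4) / (lam - 6), (lam - 4) / (lam - 6),
      (lam - 4) / (lam - 6), (lam - 4) / (lam - 6), -2 / (lam - 6), -2 / (lam - 6)], ?_,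
    R_mul_add_laplG1_eq_sum ?_ ?_ ?_ ?_⟩
  · exact div_ne_zero (mul_ne_zero (neg_ne_zero.mpr (sub_ne (by simp)))
      (sub_ne (by simp))) h₆
  · field_simp; ring
  · field_simp; ring
  · field_simp; ring
  · rw [R]; field_simp; ring

end SGpaper
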